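/- arXiv:2405.20322 — 3 statements merged into one kernel-verified Lean document; each statement's English description precedes it below -/
import Mathlib

section
/- Let ρ ≻ 0 be a full-rank density operator and T a trace-non-increasing completely positive map (T†[I] ⪯ I) that is ρ-detailed balanced. Define K := sqrt( ρ^{1/2} (I - T†[I]) ρ^{1/2} ) · ρ^{-1/2}. Then (i) K† K = I - T†[I], so Q[X] := T[X] + K X K† is a quantum channel (CPTP), and (ii) K ρ^{1/2} is positive semidefinite (in particular self-adjoint), so the map X ↦ K X K† is ρ-detailed balanced, hence Q is ρ-detailed balanced. -/
open Matrix
open scoped ComplexOrder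
open scoped MatrixOrder

/-!
With `S := sqrt(ρ^{1/2} (I - T†[I]) ρ^{1/2})` and `K := S ρ^{-1/2}` one has
`Kᴴ K = ρ^{-1/2} S² ρ^{-1/2} = I - T†[I]`, which is exactly the missing trace of `T`.
Moreover `K ρ^{1/2} = S` is positive semidefinite, hence self-adjoint, and a single Kraus map
`X ↦ K X Kᴴ` with `K ρ^{1/2}` self-adjoint is `ρ`-detailed balanced. Detailed balance is
additive, so `Q = T + K · Kᴴ` inherits it from `T`.
-/

variable {n : Type*} [Fintype n] [DecidableEq n]

section DetailedBalance

variable {R : Type*} [CommRing R]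

/-- `σ` plays the role of `ρ^{1/4}` and `Madj` that of the adjoint `M†`. -/
def DetailedBalance (σ : Matrix n n R) (M Madj : Matrix n n R → Matrix n n R) : Prop :=
  ∀ X, σ⁻¹ * M (σ * X * σ) * σ⁻¹ = σ * Madj (σ⁻¹ * X * σ⁻¹) * σ

theorem DetailedBalance.add {σ : Matrix n n R} {M Madj N Nadj : Matrix n n R → Matrix n n R}
    (hM : DetailedBalance σ M Madj) (hN : DetailedBalance σ N Nadj) :
    DetailedBalance σ (fun X => M X + N X) (fun X => Madj X + Nadj X) := by
  intro X
  simp only [mul_add, add_mul, hM X, hN X]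

theorem detailedBalance_conj [StarRing R] {σ K : Matrix n n R} (hσ : IsUnit σ.det)
    (hK : K * (σ * σ) = σ * σ * Kᴴ) :
    DetailedBalance σ (fun X => K * X * Kᴴ) (fun X => Kᴴ * X * K) := by
  have hswap : σ⁻¹ * K * σ = σ * Kᴴ * σ⁻¹ :=
    calc σ⁻¹ * K * σ = σ⁻¹ * (K * (σ * σ)) * σ⁻¹ := by
          simp only [mul_assoc, mul_nonsing_inv σ hσ, mul_one]
      _ = σ * Kᴴ * σ⁻¹ := by
          rw [hK]; simp only [← mul_assoc, nonsing_inv_mul σ hσ, one_mul]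
  intro X
  calc σ⁻¹ * (K * (σ * X * σ) * Kᴴ) * σ⁻¹
      = (σ⁻¹ * K * σ) * X * (σ * Kᴴ * σ⁻¹) := by noncomm_ring
    _ = (σ * Kᴴ * σ⁻¹) * X * (σ⁻¹ * K * σ) := by rw [hswap]
    _ = σ * (Kᴴ * (σ⁻¹ * X * σ⁻¹) * K) * σ := by noncomm_ring

theorem trace_add_conj_eq_trace [StarRing R] {T Tadj : Matrix n n R → Matrix n n R}
    {K : Matrix n n R}
    (hadj : ∀ X Y, (Yᴴ * T X).trace = ((Tadj Y)ᴴ * X).trace) (hK : Kᴴ * K = 1 - Tadj 1)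
    (X : Matrix n n R) : (T X + K * X * Kᴴ).trace = X.trace := by
  have hTadj : (Tadj 1)ᴴ = Tadj 1 := by
    rw [← sub_sub_cancel 1 (Tadj 1), ← hK, conjTranspose_sub, conjTranspose_one,
      conjTranspose_mul, conjTranspose_conjTranspose]
  have hT : (T X).trace = (Tadj 1 * X).trace := by
    simpa only [conjTranspose_one, one_mul, hTadj] using hadj X 1
  rw [trace_add, hT, trace_mul_cycle, hK, ← trace_add, ← add_mul, add_sub_cancel,
    one_mul]

end DetailedBalance

theorem sqrt_mul_inv_conjTranspose_mul_self {A P : Matrix n n ℂ} (hA : A.IsHermitian)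
    (hAu : IsUnit A.det) (hP : (A * P * A).PosSemidef) :
    (CFC.sqrt (A * P * A) * A⁻¹)ᴴ * (CFC.sqrt (A * P * A) * A⁻¹) = P := by
  have hS : (CFC.sqrt (A * P * A))ᴴ = CFC.sqrt (A * P * A) :=
    (nonneg_iff_posSemidef.mp (CFC.sqrt_nonneg _)).isHermitian
  have hSS : CFC.sqrt (A * P * A) * CFC.sqrt (A * P * A) = A * P * A :=
    CFC.sqrt_mul_sqrt_self _ (nonneg_iff_posSemidef.mpr hP)
  calc (CFC.sqrt (A * P * A) * A⁻¹)ᴴ * (CFC.sqrt (A * P * A) * A⁻¹)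
      = A⁻¹ * (CFC.sqrt (A * P * A) * CFC.sqrt (A * P * A)) * A⁻¹ := by
        rw [conjTranspose_mul, hS, hA.inv.eq]; noncomm_ring
    _ = (A⁻¹ * A) * P * (A * A⁻¹) := by rw [hSS]; noncomm_ring
    _ = P := by rw [nonsing_inv_mul A hAu, mul_nonsing_inv A hAu, one_mul, mul_one]

theorem sqrt_mul_inv_mul_posSemidef {A P : Matrix n n ℂ} (hAu : IsUnit A.det) :
    (CFC.sqrt (A * P * A) * A⁻¹ * A).PosSemidef := by
  rw [mul_assoc, nonsing_inv_mul A hAu, mul_one]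
  exact nonneg_iff_posSemidef.mp (CFC.sqrt_nonneg _)

theorem discrete_reject_term_general (d : ℕ)
    (T Tadj : Matrix (Fin d) (Fin d) ℂ →ₗ[ℂ] Matrix (Fin d) (Fin d) ℂ)
    (hadj : ∀ X Y, (Yᴴ * T X).trace = ((Tadj Y)ᴴ * X).trace)
    (ρhalf ρhalfinv ρ4 ρ4inv : Matrix (Fin d) (Fin d) ℂ)
    (hρhalf : ρhalf.PosDef)
    (hhalf1 : ρhalf * ρhalfinv = 1)
    (h4 : ρ4 * ρ4 = ρhalf)
    (h41 : ρ4 * ρ4inv = 1)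
    (hDBT : ∀ X, ρ4inv * T (ρ4 * X * ρ4) * ρ4inv =
      ρ4 * Tadj (ρ4inv * X * ρ4inv) * ρ4)
    (hP : (ρhalf * (1 - Tadj 1) * ρhalf).PosSemidef)
    (K : Matrix (Fin d) (Fin d) ℂ) (hK : K = CFC.sqrt (ρhalf * (1 - Tadj 1) * ρhalf) * ρhalfinv) :
    Kᴴ * K = 1 - Tadj 1 ∧
    (∀ X, (T X + K * X * Kᴴ).trace = X.trace) ∧
    (K * ρhalf).PosSemidef ∧
    (∀ X, ρ4inv * (T (ρ4 * X * ρ4) + K * (ρ4 * X * ρ4) * Kᴴ) * ρ4inv =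
      ρ4 * (Tadj (ρ4inv * X * ρ4inv) + Kᴴ * (ρ4inv * X * ρ4inv) * K) * ρ4) := by
  obtain rfl : ρhalfinv = ρhalf⁻¹ := (inv_eq_right_inv hhalf1).symm
  obtain rfl : ρ4inv = ρ4⁻¹ := (inv_eq_right_inv h41).symm
  have hρhalfu := isUnit_det_of_right_inverse hhalf1
  have hKK : Kᴴ * K = 1 - Tadj 1 := by
    rw [hK]; exact sqrt_mul_inv_conjTranspose_mul_self hρhalf.isHermitian hρhalfu hP
  have hKρ : (K * ρhalf).PosSemidef := by
    rw [hK]; exact sqrt_mul_inv_mul_posSemidef hρhalfu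
  have hKcomm : K * (ρ4 * ρ4) = ρ4 * ρ4 * Kᴴ := by
    rw [h4, ← hρhalf.isHermitian.eq, ← conjTranspose_mul, hKρ.isHermitian.eq,
      hρhalf.isHermitian.eq]
  have hDBQ : DetailedBalance ρ4 (fun X => T X + K * X * Kᴴ) (fun X => Tadj X + Kᴴ * X * K) :=
    DetailedBalance.add hDBT (detailedBalance_conj (isUnit_det_of_right_inverse h41) hKcomm)
  exact ⟨hKK, trace_add_conj_eq_trace hadj hKK, hKρ, hDBQ⟩

/-- Prescription for the rejection part, discrete time. Let `ρ ≻ 0` be a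
full-rank density matrix (with square root `ρhalf = ρ^{1/2}`, quarter power
`ρ4 = ρ^{1/4}` and their inverses), and let `T` be a trace-non-increasing
completely positive map (`T†[I] ⪯ I`) which is `ρ`-detailed balanced. With
`K := sqrt(ρ^{1/2} (I - T†[I]) ρ^{1/2}) ρ^{-1/2}` we have: (i) `Kᴴ K = I - T†[I]`,
so `Q[X] = T[X] + K X Kᴴ` is trace preserving (and CP); and (ii) `K ρ^{1/2}` is
positive semidefinite (in particular self-adjoint), and `Q` is `ρ`-detailed
balanced. -/
theorem discrete_reject_term (d : ℕ)
    (ρ : Matrix (Fin d) (Fin d) ℂ) (hρ : ρ.PosDef) (hρtr : ρ.trace = 1)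
    (T Tadj : Matrix (Fin d) (Fin d) ℂ →ₗ[ℂ] Matrix (Fin d) (Fin d) ℂ)
    (hadj : ∀ X Y, (Yᴴ * T X).trace = ((Tadj Y)ᴴ * X).trace)
    (hCP : ∃ (m : ℕ) (A : Fin m → Matrix (Fin d) (Fin d) ℂ),
      ∀ X, T X = ∑ a, A a * X * (A a)ᴴ)
    (hTNI : (1 - Tadj 1).PosSemidef)
    (ρhalf ρhalfinv ρ4 ρ4inv : Matrix (Fin d) (Fin d) ℂ)
    (hρhalf : ρhalf.PosDef) (hhalf : ρhalf * ρhalf = ρ)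
    (hhalf1 : ρhalf * ρhalfinv = 1) (hhalf2 : ρhalfinv * ρhalf = 1)
    (hρ4 : ρ4.PosDef) (h4 : ρ4 * ρ4 = ρhalf)
    (h41 : ρ4 * ρ4inv = 1) (h42 : ρ4inv * ρ4 = 1)
    (hDBT : ∀ X, ρ4inv * T (ρ4 * X * ρ4) * ρ4inv =
      ρ4 * Tadj (ρ4inv * X * ρ4inv) * ρ4)
    (hP : (ρhalf * (1 - Tadj 1) * ρhalf).PosSemidef)
    (K : Matrix (Fin d) (Fin d) ℂ) (hK : K = CFC.sqrt (ρhalf * (1 - Tadj 1) * ρhalf) * ρhalfinv) :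
    Kᴴ * K = 1 - Tadj 1 ∧
    (∀ X, (T X + K * X * Kᴴ).trace = X.trace) ∧
    (K * ρhalf).PosSemidef ∧
    (∀ X, ρ4inv * (T (ρ4 * X * ρ4) + K * (ρ4 * X * ρ4) * Kᴴ) * ρ4inv =
      ρ4 * (Tadj (ρ4inv * X * ρ4inv) + Kᴴ * (ρ4inv * X * ρ4inv) * K) * ρ4) :=
  discrete_reject_term_general d T Tadj hadj ρhalf ρhalfinv ρ4 ρ4inv hρhalf hhalf1 h4 h41 hDBT hP K
    hK
end

section
/- Let K' be a d×d matrix and ρ ≻ 0 a full-rank density matrix, with singular value decomposition K' ρ^{1/2} = V Σ W†. If K is a matrix with K† K = K'† K' and such that e^{-iφ} K ρ^{1/2} is self-adjoint for some φ ∈ ℝ, then K = e^{iφ} W U V† K' for some Hermitian unitary U commuting with Σ. Conversely, for any φ ∈ ℝ and Hermitian unitary U commuting with Σ, the matrix K := e^{iφ} W U V† K' satisfies K†K = K'†K' and e^{-iφ} K ρ^{1/2} = W U Σ W† is self-adjoint. -/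
open Matrix
open scoped ComplexOrder


lemma key_scalar {a b : ℝ} (ha : 0 ≤ a) (hb : 0 ≤ b) {x : ℂ}
    (h : ((a:ℂ)^2) * x = ((b:ℂ)^2) * x) : (a:ℂ) * x = (b:ℂ) * x := by
  rcases eq_or_ne x 0 with rfl | hx
  · simp
  · have h2 : ((a:ℂ))^2 = ((b:ℂ))^2 := mul_right_cancel₀ hx h
    have ha2 : a^2 = b^2 := by exact_mod_cast h2
    have h3 : Real.sqrt (a^2) = Real.sqrt (b^2) := by rw [ha2]
    rw [Real.sqrt_sq ha, Real.sqrt_sq hb] at h3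
    rw [h3]

lemma key_lemma {d : ℕ} (σ : Fin d → ℝ) (hσ : ∀ i, 0 ≤ σ i)
    (B : Matrix (Fin d) (Fin d) ℂ) (hB : Bᴴ = B)
    (hBB : B * B =
      (Matrix.diagonal fun i => ((σ i : ℝ) : ℂ)) * (Matrix.diagonal fun i => ((σ i : ℝ) : ℂ))) :
    ∃ U : Matrix (Fin d) (Fin d) ℂ, Uᴴ = U ∧ U * Uᴴ = 1 ∧
      U * (Matrix.diagonal fun i => ((σ i : ℝ) : ℂ)) =
        (Matrix.diagonal fun i => ((σ i : ℝ) : ℂ)) * U ∧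
      U * (Matrix.diagonal fun i => ((σ i : ℝ) : ℂ)) = B := by
  have hherm : ∀ i j, starRingEnd ℂ (B j i) = B i j := by
    intro i j
    have := congrFun (congrFun hB i) j
    simpa [Matrix.conjTranspose_apply] using this
  have hBBent : ∀ i j, ∑ k, B i k * B k j = if i = j then (σ i : ℂ) * (σ j : ℂ) else 0 := by
    intro i j
    have := congrFun (congrFun hBB i) j
    simpa [Matrix.mul_apply, Matrix.diagonal_mul_diagonal, Matrix.diagonal_apply] using this
  -- zero rows
  have hrow : ∀ i, σ i = 0 → ∀ k, B i k = 0 := by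
    intro i hi k
    have h0 : ∑ j, Complex.normSq (B i j) = 0 := by
      have h1 := hBBent i i
      simp only [if_pos rfl, hi] at h1
      have h2 : ∑ j, B i j * B j i = 0 := by simpa using h1
      have heq : ∀ j, B i j * B j i = (Complex.normSq (B i j) : ℂ) := by
        intro j
        rw [← hherm j i, Complex.mul_conj]
      rw [Finset.sum_congr rfl (fun j _ => heq j)] at h2
      exact_mod_cast h2
    have := (Finset.sum_eq_zero_iff_of_nonneg
      (fun j _ => Complex.normSq_nonneg (B i j))).mp h0 k (Finset.mem_univ k)
    exact Complex.normSq_eq_zero.mp this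
  have hcol : ∀ i k, σ k = 0 → B i k = 0 := by
    intro i k hk
    rw [← hherm i k, hrow k hk i, map_zero]
  -- commutation with σ
  have hcomm : ∀ i j, (σ i : ℂ) * B i j = (σ j : ℂ) * B i j := by
    intro i j
    have hassoc : B * (B * B) = (B * B) * B := (mul_assoc B B B).symm
    rw [hBB, Matrix.diagonal_mul_diagonal] at hassoc
    have h1 := congrFun (congrFun hassoc i) j
    simp only [Matrix.mul_diagonal, Matrix.diagonal_mul] at h1
    have h2 : ((σ i : ℂ))^2 * B i j = ((σ j : ℂ))^2 * B i j := by
      linear_combination -h1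
    exact key_scalar (hσ i) (hσ j) h2
  set U : Matrix (Fin d) (Fin d) ℂ :=
    Matrix.of (fun i j => if σ i = 0 then (if i = j then 1 else 0) else B i j / (σ i : ℂ)) with hU
  have hUapp : ∀ i j, U i j = if σ i = 0 then (if i = j then 1 else 0) else B i j / (σ i : ℂ) :=
    fun i j => rfl
  have hUS : U * (Matrix.diagonal fun i => ((σ i : ℝ) : ℂ)) = B := by
    ext i j
    rw [Matrix.mul_diagonal, hUapp]
    by_cases hi : σ i = 0
    · rw [if_pos hi, hrow i hi j]
      by_cases hij : i = j
      · subst hij; simp [hi]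
      · simp [hij]
    · rw [if_neg hi]
      have hne : (σ i : ℂ) ≠ 0 := by exact_mod_cast hi
      rw [div_mul_eq_mul_div, mul_comm (B i j) _, ← hcomm i j, mul_comm, mul_div_assoc,
        div_self hne, mul_one]
  have hSU : (Matrix.diagonal fun i => ((σ i : ℝ) : ℂ)) * U = B := by
    ext i j
    rw [Matrix.diagonal_mul, hUapp]
    by_cases hi : σ i = 0
    · rw [if_pos hi, hrow i hi j, hi]; simp
    · rw [if_neg hi]
      have hne : (σ i : ℂ) ≠ 0 := by exact_mod_cast hi
      rw [mul_div_cancel₀ _ hne]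
  have hUherm : Uᴴ = U := by
    ext i j
    rw [Matrix.conjTranspose_apply, hUapp, hUapp]
    by_cases hi : σ i = 0 <;> by_cases hj : σ j = 0
    · rw [if_pos hi, if_pos hj]
      by_cases hij : i = j
      · subst hij; simp
      · rw [if_neg (Ne.symm hij), if_neg hij]; simp
    · rw [if_pos hi, if_neg hj]
      have hij : i ≠ j := fun h => hj (h ▸ hi)
      rw [if_neg hij]
      rw [star_div₀]
      simp only [RCLike.star_def]
      rw [hherm i j, hrow i hi j, zero_div]
    · rw [if_neg hi, if_pos hj]
      have hij : i ≠ j := fun h => hi (h ▸ hj)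
      rw [if_neg (Ne.symm hij), hcol i j hj, zero_div, star_zero]
    · rw [if_neg hi, if_neg hj, star_div₀]
      simp only [RCLike.star_def]
      rw [hherm i j]
      have hnei : (σ i : ℂ) ≠ 0 := by exact_mod_cast hi
      have hnej : (σ j : ℂ) ≠ 0 := by exact_mod_cast hj
      have : (starRingEnd ℂ) ((σ j : ℝ) : ℂ) = (σ j : ℂ) := Complex.conj_ofReal _
      rw [this, div_eq_div_iff hnej hnei, mul_comm (B i j) _, mul_comm (B i j) _]
      exact hcomm i j
  have hUU : U * U = 1 := by
    ext i j
    rw [Matrix.mul_apply, Matrix.one_apply]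
    by_cases hi : σ i = 0
    · have : ∀ k, U i k * U k j = (if i = k then 1 else 0) * U k j := by
        intro k; rw [hUapp i k, if_pos hi]
      rw [Finset.sum_congr rfl (fun k _ => this k)]
      simp only [ite_mul, one_mul, zero_mul]
      rw [Finset.sum_ite_eq Finset.univ i (fun k => U k j)]
      simp only [Finset.mem_univ, if_true, one_mul]
      rw [hUapp, if_pos hi]
    · have hnei : (σ i : ℂ) ≠ 0 := by exact_mod_cast hi
      have hterm : ∀ k, U i k * U k j = B i k * B k j / ((σ i : ℂ) * (σ i : ℂ)) := by
        intro k
        rw [hUapp i k, hUapp k j, if_neg hi]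
        by_cases hk : σ k = 0
        · rw [hcol i k hk, zero_div, zero_mul, zero_mul, zero_div]
        · have hnek : (σ k : ℂ) ≠ 0 := by exact_mod_cast hk
          rw [if_neg hk, div_mul_div_comm,
            div_eq_div_iff (mul_ne_zero hnei hnek) (mul_ne_zero hnei hnei)]
          linear_combination (B k j * (σ i : ℂ)) * (hcomm i k)
      rw [Finset.sum_congr rfl (fun k _ => hterm k), ← Finset.sum_div, hBBent i j]
      by_cases hij : i = j
      · subst hij
        rw [if_pos rfl, if_pos rfl, div_self (mul_ne_zero hnei hnei)]
      · rw [if_neg hij, if_neg hij, zero_div]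
  refine ⟨U, hUherm, by rw [hUherm, hUU], by rw [hUS, hSU], hUS⟩

/-- Balancing a single Kraus operator. Let `ρhalf = ρ^{1/2} ≻ 0` (with inverse
`ρhalfinv`), `K'` a matrix with singular value decomposition
`K' ρ^{1/2} = V S Wᴴ` (`V, W` unitary, `S = diag(σ)` with `σ ≥ 0`).
Forward direction: if `Kᴴ K = K'ᴴ K'` and `e^{-iφ} K ρ^{1/2}` is self-adjoint
for some `φ ∈ ℝ`, then `K = e^{iφ} W U Vᴴ K'` for some Hermitian unitary `U`
commuting with `S`. Converse: for any `φ` and any Hermitian unitary `U`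
commuting with `S`, `K := e^{iφ} W U Vᴴ K'` satisfies `Kᴴ K = K'ᴴ K'` and
`e^{-iφ} K ρ^{1/2} = W U S Wᴴ`, which is self-adjoint. -/
theorem kraus_balance (d : ℕ)
    (ρhalf ρhalfinv : Matrix (Fin d) (Fin d) ℂ)
    (hρhalf : ρhalf.PosDef) (h1 : ρhalf * ρhalfinv = 1) (h2 : ρhalfinv * ρhalf = 1)
    (K' V W : Matrix (Fin d) (Fin d) ℂ) (σ : Fin d → ℝ) (hσ : ∀ i, 0 ≤ σ i)
    (hV : V * Vᴴ = 1 ∧ Vᴴ * V = 1) (hW : W * Wᴴ = 1 ∧ Wᴴ * W = 1)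
    (S : Matrix (Fin d) (Fin d) ℂ) (hS : S = Matrix.diagonal fun i => ((σ i : ℝ) : ℂ))
    (hSVD : K' * ρhalf = V * S * Wᴴ) :
    (∀ (K : Matrix (Fin d) (Fin d) ℂ) (φ : ℝ),
      Kᴴ * K = K'ᴴ * K' →
      (Complex.exp (-(↑φ * Complex.I)) • (K * ρhalf))ᴴ =
        Complex.exp (-(↑φ * Complex.I)) • (K * ρhalf) →
      ∃ U : Matrix (Fin d) (Fin d) ℂ,
        Uᴴ = U ∧ U * Uᴴ = 1 ∧ U * S = S * U ∧
        K = Complex.exp (↑φ * Complex.I) • (W * U * Vᴴ * K')) ∧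
    (∀ (φ : ℝ) (U : Matrix (Fin d) (Fin d) ℂ),
      Uᴴ = U → U * Uᴴ = 1 → U * S = S * U →
      (Complex.exp (↑φ * Complex.I) • (W * U * Vᴴ * K'))ᴴ *
          (Complex.exp (↑φ * Complex.I) • (W * U * Vᴴ * K')) = K'ᴴ * K' ∧
      Complex.exp (-(↑φ * Complex.I)) •
          ((Complex.exp (↑φ * Complex.I) • (W * U * Vᴴ * K')) * ρhalf) =
        W * U * S * Wᴴ ∧
      (W * U * S * Wᴴ)ᴴ = W * U * S * Wᴴ) := by
  have hρh : ρhalfᴴ = ρhalf := hρhalf.isHermitian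
  have hSh : Sᴴ = S := by
    rw [hS, Matrix.diagonal_conjTranspose]
    simp [Pi.star_def, Complex.conj_ofReal]
  -- cancellation helpers (right-associated)
  have cW : ∀ X : Matrix (Fin d) (Fin d) ℂ, Wᴴ * (W * X) = X := fun X => by
    rw [← Matrix.mul_assoc, hW.2, Matrix.one_mul]
  have cWW : ∀ X : Matrix (Fin d) (Fin d) ℂ, W * (Wᴴ * X) = X := fun X => by
    rw [← Matrix.mul_assoc, hW.1, Matrix.one_mul]
  have cV : ∀ X : Matrix (Fin d) (Fin d) ℂ, Vᴴ * (V * X) = X := fun X => by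
    rw [← Matrix.mul_assoc, hV.2, Matrix.one_mul]
  have cVV : ∀ X : Matrix (Fin d) (Fin d) ℂ, V * (Vᴴ * X) = X := fun X => by
    rw [← Matrix.mul_assoc, hV.1, Matrix.one_mul]
  constructor
  · -- forward direction
    intro K φ hK hsa
    set c := Complex.exp (-(↑φ * Complex.I)) with hc
    have hcc : Complex.exp (↑φ * Complex.I) * c = 1 := by
      rw [hc, ← Complex.exp_add, add_neg_cancel, Complex.exp_zero]
    have hstarc : star c * c = 1 := by
      have : star c = Complex.exp (↑φ * Complex.I) := by
        rw [hc]
        rw [show (star (Complex.exp (-(↑φ * Complex.I))) : ℂ)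
            = (starRingEnd ℂ) (Complex.exp (-(↑φ * Complex.I))) from rfl]
        rw [← Complex.exp_conj]
        congr 1
        simp [Complex.conj_ofReal]
      rw [this, hcc]
    set N := c • (K * ρhalf) with hN
    have hNN : N * N = W * ((Matrix.diagonal fun i => ((σ i : ℝ) : ℂ)) *
        (Matrix.diagonal fun i => ((σ i : ℝ) : ℂ))) * Wᴴ := by
      have step1 : N * N = (K * ρhalf)ᴴ * (K * ρhalf) := by
        nth_rewrite 1 [← hsa]
        rw [hN, Matrix.conjTranspose_smul, Matrix.smul_mul, Matrix.mul_smul, smul_smul,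
          hstarc, one_smul]
      have step2 : (K * ρhalf)ᴴ * (K * ρhalf) = (K' * ρhalf)ᴴ * (K' * ρhalf) := by
        rw [Matrix.conjTranspose_mul, Matrix.conjTranspose_mul, hρh,
          Matrix.mul_assoc, Matrix.mul_assoc, ← Matrix.mul_assoc Kᴴ,
          ← Matrix.mul_assoc K'ᴴ, hK]
      rw [step1, step2, hSVD]
      simp only [Matrix.conjTranspose_mul, Matrix.conjTranspose_conjTranspose, hSh,
        Matrix.mul_assoc]
      rw [cV, hS]
    set B := Wᴴ * N * W with hB
    have hBh : Bᴴ = B := by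
      rw [hB]
      simp only [Matrix.conjTranspose_mul, Matrix.conjTranspose_conjTranspose, hsa]
      rw [Matrix.mul_assoc]
    have hBB : B * B = (Matrix.diagonal fun i => ((σ i : ℝ) : ℂ)) *
        (Matrix.diagonal fun i => ((σ i : ℝ) : ℂ)) := by
      rw [hB]
      simp only [Matrix.mul_assoc]
      rw [cWW, ← Matrix.mul_assoc N N, hNN]
      simp only [Matrix.mul_assoc]
      rw [cW, hW.2, Matrix.mul_one]
    obtain ⟨U, hUh, hUU, hUSc, hUSB⟩ := key_lemma σ hσ B hBh hBB
    refine ⟨U, hUh, hUU, by rw [hS]; exact hUSc, ?_⟩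
    have hNval : N = W * U * S * Wᴴ := by
      have : W * B * Wᴴ = N := by
        rw [hB]
        simp only [Matrix.mul_assoc]
        rw [cWW, hW.1, Matrix.mul_one]
      rw [← this, ← hUSB, hS]
      simp only [Matrix.mul_assoc]
    have hKey : (W * U * Vᴴ * K') * ρhalf = N := by
      rw [hNval, Matrix.mul_assoc _ K' ρhalf, hSVD]
      simp only [Matrix.mul_assoc]
      rw [cV]
    have : (W * U * Vᴴ * K') = c • K := by
      have e1 : (W * U * Vᴴ * K') * ρhalf * ρhalfinv = (c • K) * ρhalf * ρhalfinv := by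
        rw [hKey, hN]
        simp only [Matrix.smul_mul]
      rwa [Matrix.mul_assoc _ ρhalf ρhalfinv, h1, Matrix.mul_one,
        Matrix.mul_assoc _ ρhalf ρhalfinv, h1, Matrix.mul_one] at e1
    rw [this, smul_smul, hcc, one_smul]
  · -- converse direction
    intro φ U hUh hUU hUSc
    have hcc : Complex.exp (-(↑φ * Complex.I)) * Complex.exp (↑φ * Complex.I) = 1 := by
      rw [← Complex.exp_add, neg_add_cancel, Complex.exp_zero]
    have hstarc : star (Complex.exp (↑φ * Complex.I)) * Complex.exp (↑φ * Complex.I) = 1 := by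
      have : star (Complex.exp (↑φ * Complex.I)) = Complex.exp (-(↑φ * Complex.I)) := by
        rw [show (star (Complex.exp (↑φ * Complex.I)) : ℂ)
            = (starRingEnd ℂ) (Complex.exp (↑φ * Complex.I)) from rfl]
        rw [← Complex.exp_conj]
        congr 1
        simp [Complex.conj_ofReal]
      rw [this, hcc]
    have hUU2 : U * U = 1 := by
      nth_rewrite 2 [← hUh]
      exact hUU
    have hU2 : ∀ X : Matrix (Fin d) (Fin d) ℂ, U * (U * X) = X := fun X => by
      rw [← Matrix.mul_assoc, hUU2, Matrix.one_mul]
    refine ⟨?_, ?_, ?_⟩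
    · rw [Matrix.conjTranspose_smul, Matrix.smul_mul, Matrix.mul_smul, smul_smul,
        hstarc, one_smul]
      simp only [Matrix.conjTranspose_mul, Matrix.conjTranspose_conjTranspose,
        Matrix.mul_assoc]
      rw [cW, hUh, hU2, cVV]
    · rw [Matrix.smul_mul, smul_smul, hcc, one_smul]
      rw [Matrix.mul_assoc _ K' ρhalf, hSVD]
      simp only [Matrix.mul_assoc]
      rw [cV]
    · simp only [Matrix.conjTranspose_mul, Matrix.conjTranspose_conjTranspose, hSh, hUh,
        Matrix.mul_assoc]
      rw [← Matrix.mul_assoc S U, ← hUSc, Matrix.mul_assoc]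
end

section
/- Let M ∈ {0,1}^{n×m} be a 'staircase' 0-1 matrix: whenever M_{ij} = 1 then M_{i'j'} = 1 for all i' ≥ i and j' ≤ j. Let S_M denote the Schur (entrywise) multiplication superoperator S_M[A] := A ∘ M on n×m complex matrices. Then the operator norm of S_M, as a map from (C^{n×m}, ‖·‖_op) to itself, satisfies ‖S_M‖ ≤ 1 + ⌈log₂(min(n,m))⌉. -/
/-!
The rows of a staircase 0-1 matrix are prefixes: `M i j = 1 ↔ j < cᵢ` with `cᵢ ≤ m` (and
dually, the columns are suffixes), so `A ∘ M` keeps exactly the entries with `j < cᵢ`. Every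
pair `j < c ≤ K` splits at a unique binary digit `l ≤ log₂ K`, the highest one in which `j` and
`c` differ. For fixed `l`, the pairs splitting at `l` form a disjoint union of combinatorial
rectangles (prescribed higher digits, digit `l` equal to `0` for `j` and `1` for `c`), so the
corresponding Schur multiplier is a block-diagonal compression of `A` and has norm at most `1`.
Summing over the `1 + ⌊log₂ K⌋` digits, with `K = m` or `K = n`, gives the bound.
-/

open Matrix

/-- The `ℓ₂ → ℓ₂` operator (spectral) norm of a rectangular complex matrix. -/
noncomputable def opNorm {m n : Type*} [Fintype m] [Fintype n] [DecidableEq n]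
    (A : Matrix m n ℂ) : ℝ :=
  ‖LinearMap.toContinuousLinearMap (Matrix.toEuclideanLin A)‖

open Finset

def mask {ι κ : Type*} (P : ι → κ → Prop) [∀ i j, Decidable (P i j)] (A : Matrix ι κ ℂ) :
    Matrix ι κ ℂ :=
  of fun i j => if P i j then A i j else 0

lemma hadamard_eq_mask {ι κ : Type*} {M : Matrix ι κ ℂ} (h01 : ∀ i j, M i j = 0 ∨ M i j = 1)
    {P : ι → κ → Prop} [∀ i j, Decidable (P i j)] (hP : ∀ i j, M i j = 1 ↔ P i j)
    (A : Matrix ι κ ℂ) : hadamard M A = mask P A := by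
  ext i j
  rcases h01 i j with h | h
  · simp [mask, h, (hP i j).not.1 (by simp [h])]
  · simp [mask, h, (hP i j).1 h]

section
variable {ι κ : Type*} [Fintype ι] [Fintype κ] [DecidableEq κ]

lemma norm_toEuclideanLin_le_opNorm (A : Matrix ι κ ℂ) (x : EuclideanSpace ℂ κ) :
    ‖toEuclideanLin A x‖ ≤ opNorm A * ‖x‖ :=
  (LinearMap.toContinuousLinearMap (toEuclideanLin A)).le_opNorm x

lemma opNorm_le_of_norm_sq_le {A : Matrix ι κ ℂ} {c : ℝ} (hc : 0 ≤ c)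
    (h : ∀ x, ‖toEuclideanLin A x‖ ^ 2 ≤ c ^ 2 * ‖x‖ ^ 2) : opNorm A ≤ c :=
  ContinuousLinearMap.opNorm_le_bound _ hc fun x =>
    le_of_pow_le_pow_left₀ two_ne_zero (by positivity) (by rw [mul_pow]; exact h x)

lemma opNorm_sum_le {β : Type*} (s : Finset β) (A : β → Matrix ι κ ℂ) :
    opNorm (∑ l ∈ s, A l) ≤ ∑ l ∈ s, opNorm (A l) := by
  unfold opNorm
  rw [map_sum toEuclideanLin A s, map_sum LinearMap.toContinuousLinearMap _ s]
  exact norm_sum_le s _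

lemma sum_comp_le_sum_image {α : Type*} [DecidableEq α] (f : ι → α) (F : ι → α → ℝ)
    (hF : ∀ i k, 0 ≤ F i k) : ∑ i, F i (f i) ≤ ∑ k ∈ univ.image f, ∑ i, F i k := by
  rw [← sum_fiberwise_of_maps_to (fun i _ => mem_image_of_mem f (mem_univ i))]
  refine sum_le_sum fun k _ => ?_
  rw [sum_filter]
  exact sum_le_sum fun i _ => by split_ifs with h <;> simp [h, hF]

/-- With `xₖ` the part of `x` on the columns labelled `k`, the rows labelled `k` of `(mask A) x`
are those of `A xₖ`, and the `xₖ` are orthogonal. -/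
theorem opNorm_mask_eq_le {α : Type*} [DecidableEq α] (f : ι → α) (g : κ → α)
    (A : Matrix ι κ ℂ) : opNorm (mask (fun i j => f i = g j) A) ≤ opNorm A := by
  refine opNorm_le_of_norm_sq_le (norm_nonneg _) fun x => ?_
  set S := univ.image f
  let xs : α → EuclideanSpace ℂ κ := fun k => WithLp.toLp 2 fun j => if g j = k then x j else 0
  have h_apply : ∀ i, toEuclideanLin (mask (fun i j => f i = g j) A) x i
      = toEuclideanLin A (xs (f i)) i := fun i => by
    change (mask _ A *ᵥ x.ofLp) i = (A *ᵥ (xs (f i)).ofLp) i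
    simp only [mulVec, dotProduct, mask, of_apply, xs]
    exact sum_congr rfl fun j _ => by split_ifs <;> simp_all
  have h_cols : ∑ k ∈ S, ‖xs k‖ ^ 2 ≤ ‖x‖ ^ 2 := by
    simp only [EuclideanSpace.norm_sq_eq, xs, apply_ite, norm_zero, ite_pow,
      zero_pow two_ne_zero]
    rw [sum_comm]
    refine sum_le_sum fun j _ => ?_
    rw [sum_ite_eq]
    split_ifs <;> simp
  calc ‖toEuclideanLin (mask (fun i j => f i = g j) A) x‖ ^ 2
      = ∑ i, ‖toEuclideanLin A (xs (f i)) i‖ ^ 2 := by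
        rw [EuclideanSpace.norm_sq_eq]; simp only [h_apply]
    _ ≤ ∑ k ∈ S, ∑ i, ‖toEuclideanLin A (xs k) i‖ ^ 2 :=
        sum_comp_le_sum_image f (fun i k => ‖toEuclideanLin A (xs k) i‖ ^ 2)
          fun _ _ => sq_nonneg _
    _ = ∑ k ∈ S, ‖toEuclideanLin A (xs k)‖ ^ 2 := by simp only [EuclideanSpace.norm_sq_eq]
    _ ≤ ∑ k ∈ S, opNorm A ^ 2 * ‖xs k‖ ^ 2 := sum_le_sum fun k _ => by
        rw [← mul_pow]; gcongr; exact norm_toEuclideanLin_le_opNorm A (xs k)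
    _ ≤ opNorm A ^ 2 * ‖x‖ ^ 2 := by rw [← mul_sum]; gcongr

theorem opNorm_mask_le_card {α β : Type*} [DecidableEq α] (s : Finset β) (f : β → ι → α)
    (g : β → κ → α) (P : ι → κ → Prop) [∀ i j, Decidable (P i j)]
    (hP : ∀ i j, P i j ↔ ∃ l ∈ s, f l i = g l j)
    (hunique : ∀ i j, ∀ l ∈ s, ∀ l' ∈ s, f l i = g l j → f l' i = g l' j → l = l')
    (A : Matrix ι κ ℂ) : opNorm (mask P A) ≤ #s * opNorm A := by
  have h_sum : mask P A = ∑ l ∈ s, mask (fun i j => f l i = g l j) A := by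
    ext i j
    simp only [mask, Matrix.sum_apply, of_apply]
    by_cases h : P i j
    · obtain ⟨l, hl, hfg⟩ := (hP i j).1 h
      rw [if_pos h, sum_eq_single_of_mem l hl (fun l' hl' hne => if_neg fun h' =>
        hne (hunique i j l' hl' l hl h' hfg)), if_pos hfg]
    · rw [if_neg h]
      exact (sum_eq_zero fun l hl => if_neg fun h' => h ((hP i j).2 ⟨l, hl, h'⟩)).symm
  calc opNorm (mask P A) ≤ ∑ l ∈ s, opNorm (mask (fun i j => f l i = g l j) A) :=
        h_sum ▸ opNorm_sum_le s _
    _ ≤ ∑ _l ∈ s, opNorm A := sum_le_sum fun l _ => opNorm_mask_eq_le (f l) (g l) A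
    _ = #s * opNorm A := by rw [sum_const, nsmul_eq_mul]

end

namespace Nat

lemma div_pow_succ (x b l : ℕ) : x / b ^ (l + 1) = x / b ^ l / b := by
  rw [pow_succ, Nat.div_div_eq_div_mul]

lemma div_pow_succ' (x b l : ℕ) : x / b ^ (l + 1) = x / b / b ^ l := by
  rw [pow_succ', Nat.div_div_eq_div_mul]

lemma div_pow_eq_of_le {x y b l l' : ℕ} (h : x / b ^ l = y / b ^ l) (hl : l ≤ l') :
    x / b ^ l' = y / b ^ l' := by
  obtain ⟨c, rfl⟩ := Nat.exists_eq_add_of_le hl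
  rw [pow_add, ← Nat.div_div_eq_div_mul, ← Nat.div_div_eq_div_mul, h]

end Nat

def SplitsAt (l x y : ℕ) : Prop :=
  x / 2 ^ (l + 1) = y / 2 ^ (l + 1) ∧ x / 2 ^ l % 2 = 0 ∧ y / 2 ^ l % 2 = 1

namespace SplitsAt

lemma lt {l x y : ℕ} (h : SplitsAt l x y) : x < y := by
  obtain ⟨h_high, hx, hy⟩ := h
  rw [Nat.div_pow_succ, Nat.div_pow_succ y] at h_high
  have : x / 2 ^ l < y / 2 ^ l := by omega
  exact lt_of_not_ge fun hyx => (Nat.div_le_div_right hyx).not_gt this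

lemma le_log {l x y : ℕ} (h : SplitsAt l x y) : l ≤ Nat.log 2 y := by
  obtain ⟨-, -, hy⟩ := h
  have h_pos : 1 ≤ y / 2 ^ l := Nat.one_le_iff_ne_zero.2 fun h0 => by simp [h0] at hy
  exact Nat.le_log_of_pow_le one_lt_two <| (Nat.one_le_div_iff (by positivity)).1 h_pos

lemma not_of_lt {l l' x y : ℕ} (h : SplitsAt l x y) (hl : l < l') : ¬SplitsAt l' x y := by
  rintro ⟨-, hx, hy⟩
  have := Nat.div_pow_eq_of_le h.1 hl
  omega

lemma unique {l l' x y : ℕ} (h : SplitsAt l x y) (h' : SplitsAt l' x y) : l = l' := by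
  rcases lt_trichotomy l l' with hl | hl | hl
  exacts [(h.not_of_lt hl h').elim, hl, (h'.not_of_lt hl h).elim]

lemma exists_of_lt {x y : ℕ} (h : x < y) : ∃ l, SplitsAt l x y := by
  induction y using Nat.strong_induction_on generalizing x with
  | _ y ih =>
    by_cases h_half : x / 2 = y / 2
    · refine ⟨0, ?_⟩
      simp only [SplitsAt, zero_add, pow_one, pow_zero, Nat.div_one]
      omega
    · have hlt : x / 2 < y / 2 := lt_of_le_of_ne (Nat.div_le_div_right h.le) h_half
      obtain ⟨l, hl⟩ := ih (y / 2) (by omega) hlt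
      refine ⟨l + 1, ?_⟩
      simpa only [SplitsAt, Nat.div_pow_succ' _ 2 (l + 1), Nat.div_pow_succ' _ 2 l] using hl

end SplitsAt

lemma lt_iff_exists_splitsAt {x y K : ℕ} (hy : y ≤ K) :
    x < y ↔ ∃ l ∈ range (Nat.log 2 K + 1), SplitsAt l x y := by
  refine ⟨fun h => ?_, fun ⟨_, _, hl⟩ => hl.lt⟩
  obtain ⟨l, hl⟩ := SplitsAt.exists_of_lt h
  exact ⟨l, mem_range.2 (Nat.lt_succ_of_le (hl.le_log.trans (Nat.log_mono_right hy))), hl⟩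

/-- The two `inr` values are distinct junk labels, so equal labels are always `inl`. -/
def lowLabel (l x : ℕ) : ℕ ⊕ Bool :=
  if x / 2 ^ l % 2 = 0 then .inl (x / 2 ^ (l + 1)) else .inr false

def highLabel (l y : ℕ) : ℕ ⊕ Bool :=
  if y / 2 ^ l % 2 = 1 then .inl (y / 2 ^ (l + 1)) else .inr true

lemma lowLabel_eq_highLabel_iff (l x y : ℕ) : lowLabel l x = highLabel l y ↔ SplitsAt l x y := by
  unfold lowLabel highLabel SplitsAt
  split_ifs <;> simp_all

lemma highLabel_eq_lowLabel_iff (l x y : ℕ) : highLabel l y = lowLabel l x ↔ SplitsAt l x y := by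
  rw [eq_comm, lowLabel_eq_highLabel_iff]

section
variable {ι κ : Type*} [Fintype ι] [Fintype κ] [DecidableEq κ]

theorem opNorm_mask_lt_le_of_le_right (K : ℕ) (p : ι → ℕ) (q : κ → ℕ) (hq : ∀ j, q j ≤ K)
    (A : Matrix ι κ ℂ) :
    opNorm (mask (fun i j => p i < q j) A) ≤ ((Nat.log 2 K + 1 : ℕ) : ℝ) * opNorm A := by
  have h := opNorm_mask_le_card (range (Nat.log 2 K + 1)) (fun l i => lowLabel l (p i))
    (fun l j => highLabel l (q j)) (fun i j => p i < q j)
    (fun i j => by simp only [lowLabel_eq_highLabel_iff, lt_iff_exists_splitsAt (hq j)])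
    (fun i j l _ l' _ h h' => ((lowLabel_eq_highLabel_iff ..).1 h).unique
      ((lowLabel_eq_highLabel_iff ..).1 h')) A
  rwa [card_range] at h

theorem opNorm_mask_lt_le_of_le_left (K : ℕ) (p : ι → ℕ) (q : κ → ℕ) (hp : ∀ i, p i ≤ K)
    (A : Matrix ι κ ℂ) :
    opNorm (mask (fun i j => q j < p i) A) ≤ ((Nat.log 2 K + 1 : ℕ) : ℝ) * opNorm A := by
  have h := opNorm_mask_le_card (range (Nat.log 2 K + 1)) (fun l i => highLabel l (p i))
    (fun l j => lowLabel l (q j)) (fun i j => q j < p i)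
    (fun i j => by simp only [highLabel_eq_lowLabel_iff, lt_iff_exists_splitsAt (hp i)])
    (fun i j l _ l' _ h h' => ((highLabel_eq_lowLabel_iff ..).1 h).unique
      ((highLabel_eq_lowLabel_iff ..).1 h')) A
  rwa [card_range] at h

end

lemma Fin.mem_iff_lt_card_of_isLowerSet {m : ℕ} {S : Finset (Fin m)}
    (hS : IsLowerSet (S : Set (Fin m))) (j : Fin m) : j ∈ S ↔ (j : ℕ) < #S := by
  constructor
  · intro hj
    have := card_le_card fun j' hj' => hS (mem_Iic.1 hj') hj
    rw [Fin.card_Iic] at this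
    omega
  · intro h
    by_contra hj
    have := card_le_card fun j' (hj' : j' ∈ S) =>
      mem_Iio.2 (lt_of_not_ge fun hle => hj (hS hle hj'))
    rw [Fin.card_Iio] at this
    omega

lemma Fin.mem_iff_sub_lt_card_of_isUpperSet {n : ℕ} {S : Finset (Fin n)}
    (hS : IsUpperSet (S : Set (Fin n))) (i : Fin n) : i ∈ S ↔ n - 1 - i < #S := by
  constructor
  · intro hi
    have := card_le_card fun i' hi' => hS (mem_Ici.1 hi') hi
    rw [Fin.card_Ici] at this
    omega
  · intro h
    by_contra hi
    have := card_le_card fun i' (hi' : i' ∈ S) =>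
      mem_Ioi.2 (lt_of_not_ge fun hle => hi (hS hle hi'))
    rw [Fin.card_Ioi] at this
    omega

section Staircase
variable {n m : ℕ} {M : Matrix (Fin n) (Fin m) ℂ}

theorem opNorm_hadamard_staircase_le_log_width (h01 : ∀ i j, M i j = 0 ∨ M i j = 1)
    (hstair : ∀ i j i' j', M i j = 1 → i ≤ i' → j' ≤ j → M i' j' = 1)
    (A : Matrix (Fin n) (Fin m) ℂ) :
    opNorm (hadamard M A) ≤ ((Nat.log 2 m + 1 : ℕ) : ℝ) * opNorm A := by
  have h_row : ∀ i j, M i j = 1 ↔ (j : ℕ) < #{j | M i j = 1} := fun i j => by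
    simpa using Fin.mem_iff_lt_card_of_isLowerSet (S := {j | M i j = 1})
      (fun j j' hle hj => by simpa using hstair i j i j' (by simpa using hj) le_rfl hle) j
  rw [hadamard_eq_mask h01 h_row]
  exact opNorm_mask_lt_le_of_le_left m _ _
    (fun i => (card_le_univ _).trans (Fintype.card_fin m).le) A

theorem opNorm_hadamard_staircase_le_log_height (h01 : ∀ i j, M i j = 0 ∨ M i j = 1)
    (hstair : ∀ i j i' j', M i j = 1 → i ≤ i' → j' ≤ j → M i' j' = 1)
    (A : Matrix (Fin n) (Fin m) ℂ) :
    opNorm (hadamard M A) ≤ ((Nat.log 2 n + 1 : ℕ) : ℝ) * opNorm A := by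
  have h_col : ∀ i j, M i j = 1 ↔ n - 1 - (i : ℕ) < #{i | M i j = 1} := fun i j => by
    simpa using Fin.mem_iff_sub_lt_card_of_isUpperSet (S := {i | M i j = 1})
      (fun i i' hle hi => by simpa using hstair i j i' j (by simpa using hi) hle le_rfl) i
  rw [hadamard_eq_mask h01 h_col]
  exact opNorm_mask_lt_le_of_le_right n _ _
    (fun j => (card_le_univ _).trans (Fintype.card_fin n).le) A

end Staircase

theorem staircase_schur_multiplier_norm_general (n m : ℕ)
    (M : Matrix (Fin n) (Fin m) ℂ)
    (h01 : ∀ i j, M i j = 0 ∨ M i j = 1)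
    (hstair : ∀ i j i' j', M i j = 1 → i ≤ i' → j' ≤ j → M i' j' = 1) :
    ∀ A : Matrix (Fin n) (Fin m) ℂ,
      opNorm (Matrix.hadamard M A) ≤ ((1 + Nat.clog 2 (min n m) : ℕ) : ℝ) * opNorm A := by
  intro A
  have h_log : ∀ K,
      ((Nat.log 2 K + 1 : ℕ) : ℝ) * opNorm A ≤ ((1 + Nat.clog 2 K : ℕ) : ℝ) * opNorm A :=
    fun K => mul_le_mul_of_nonneg_right
      (Nat.cast_le.2 (by have := Nat.log_le_clog 2 K; omega)) (norm_nonneg _)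
  rcases le_total n m with h | h
  · rw [min_eq_left h]
    exact (opNorm_hadamard_staircase_le_log_height h01 hstair A).trans (h_log n)
  · rw [min_eq_right h]
    exact (opNorm_hadamard_staircase_le_log_width h01 hstair A).trans (h_log m)

/-- Norm bound for staircase Schur multipliers: if `M ∈ {0,1}^{n×m}` is such
that `M_{ij} = 1` implies `M_{i'j'} = 1` whenever `i' ≥ i` and `j' ≤ j`, then
the Schur (entrywise) multiplication by `M` has operator norm (as a map of the
spectral norm) at most `1 + ⌈log₂ (min n m)⌉`. -/
theorem staircase_schur_multiplier_norm (n m : ℕ) (hn : 0 < n) (hm : 0 < m)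
    (M : Matrix (Fin n) (Fin m) ℂ)
    (h01 : ∀ i j, M i j = 0 ∨ M i j = 1)
    (hstair : ∀ i j i' j', M i j = 1 → i ≤ i' → j' ≤ j → M i' j' = 1) :
    ∀ A : Matrix (Fin n) (Fin m) ℂ,
      opNorm (Matrix.hadamard M A) ≤ ((1 + Nat.clog 2 (min n m) : ℕ) : ℝ) * opNorm A :=
  staircase_schur_multiplier_norm_general n m M h01 hstair
end
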